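/- For even n ≥ 6 with β_n = binom(n,2), the top coefficients of d_n(q) violate log-concavity at the last term: A_n(β_n) / A_n(β_n - 1) > A_n(β_n - 1) / A_n(β_n - 2), equivalently A_n(β_n) A_n(β_n - 2) > A_n(β_n - 1)². -/

import Mathlib

open Polynomial

/-- The q-derangement polynomial, defined by the recursion
`d_n(q) = (1+q+⋯+q^{n-1}) d_{n-1}(q) + (-1)^n q^{C(n,2)}` for `n ≥ 2`, with `d_1(q) = 0`. -/
noncomputable def dq : ℕ → Polynomial ℤ
  | 0 => 0
  | 1 => 0
  | (n + 2) =>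
      (∑ i ∈ Finset.range (n + 2), X ^ i) * dq (n + 1)
        + (-1) ^ (n + 2) * X ^ ((n + 2).choose 2)

/-- `A n k` is the coefficient of `q^k` in `d_n(q)`. -/
noncomputable def A (n k : ℕ) : ℤ := (dq n).coeff k

/-!
If `p` has degree at most `d`, the coefficients of `(1 + q + ⋯ + q^n) p` at `d + n - j` are the
partial sums of the coefficients of `p` at `d, d - 1, …, d - j`, and `β_{n+1} = β_n + n`. So the top
three coefficients `(a, b, c)` of `d_n` evolve as `(a ± 1, a + b, a + b + c)`, the sign coming from
`(-1)^(n+1) q^{β_{n+1}}`. Starting from `d_4` with `(1, 1, 2)`, two steps at a time give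
`(1, k - 1, k (k - 1))` for `n = 2k`, and `k (k - 1) > (k - 1)^2`.
-/

open Finset

lemma dq_succ {n : ℕ} (hn : 1 ≤ n) :
    dq (n + 1) =
      (∑ i ∈ range (n + 1), X ^ i) * dq n + (-1) ^ (n + 1) * X ^ ((n + 1).choose 2) := by
  obtain ⟨m, rfl⟩ : ∃ m, n = m + 1 := ⟨n - 1, by omega⟩
  rfl

lemma choose_two_succ (n : ℕ) : (n + 1).choose 2 = n.choose 2 + n := by
  rw [Nat.choose_succ_succ', Nat.choose_one_right, add_comm]

lemma natDegree_geomSum_le {R : Type*} [Semiring R] (N : ℕ) :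
    (∑ i ∈ range (N + 1), X ^ i : R[X]).natDegree ≤ N :=
  natDegree_sum_le_of_forall_le _ _ fun i hi ↦
    (natDegree_X_pow_le i).trans (Nat.lt_succ_iff.mp (mem_range.mp hi))

lemma natDegree_dq_le (n : ℕ) : (dq n).natDegree ≤ n.choose 2 := by
  induction n with
  | zero => simp [dq]
  | succ n ih =>
    rcases Nat.eq_zero_or_pos n with rfl | hn
    · simp [dq]
    rw [dq_succ hn, choose_two_succ]
    refine natDegree_add_le_of_degree_le ?_ ?_
    · refine natDegree_mul_le.trans ?_
      have := natDegree_geomSum_le (R := ℤ) n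
      omega
    · refine natDegree_mul_le.trans ?_
      simp

lemma coeff_geomSum_mul_of_natDegree_le {R : Type*} [Semiring R] {p : R[X]} {d N j : ℕ}
    (hp : p.natDegree ≤ d) (hjN : j ≤ N) (hjd : j ≤ d) :
    ((∑ i ∈ range (N + 1), X ^ i) * p).coeff (d + N - j) =
      ∑ t ∈ range (j + 1), p.coeff (d - t) := by
  rw [sum_mul, finsetSum_coeff, show N + 1 = (N - j) + (j + 1) by omega, sum_range_add]
  have hlow : ∑ i ∈ range (N - j), (X ^ i * p).coeff (d + N - j) = 0 :=
    sum_eq_zero fun i hi ↦ by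
      have hi : i < N - j := mem_range.mp hi
      rw [coeff_X_pow_mul', if_pos (show i ≤ d + N - j by omega)]
      exact coeff_eq_zero_of_natDegree_lt (by omega)
  rw [hlow, zero_add]
  refine sum_congr rfl fun t ht ↦ ?_
  have ht : t < j + 1 := mem_range.mp ht
  rw [coeff_X_pow_mul', if_pos (show N - j + t ≤ d + N - j by omega)]
  congr 1
  omega

lemma A_succ_choose_two_sub {n j : ℕ} (hn : 1 ≤ n) (hjn : j ≤ n) (hjd : j ≤ n.choose 2) :
    A (n + 1) ((n + 1).choose 2 - j) =
      ∑ t ∈ range (j + 1), A n (n.choose 2 - t) + if j = 0 then (-1) ^ (n + 1) else 0 := by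
  have hsign : ((-1 : ℤ[X]) ^ (n + 1)) = C ((-1) ^ (n + 1)) := by simp
  unfold A
  rw [dq_succ hn, coeff_add, choose_two_succ,
    coeff_geomSum_mul_of_natDegree_le (natDegree_dq_le n) hjn hjd, hsign, coeff_C_mul, coeff_X_pow]
  have hexp : n.choose 2 + n - j = n.choose 2 + n ↔ j = 0 := by omega
  simp only [hexp, mul_ite, mul_one, mul_zero]

lemma A_succ_top_three {n : ℕ} (hn : 3 ≤ n) :
    A (n + 1) ((n + 1).choose 2) = A n (n.choose 2) + (-1) ^ (n + 1) ∧
    A (n + 1) ((n + 1).choose 2 - 1) = A n (n.choose 2) + A n (n.choose 2 - 1) ∧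
    A (n + 1) ((n + 1).choose 2 - 2) =
      A n (n.choose 2) + A n (n.choose 2 - 1) + A n (n.choose 2 - 2) := by
  have hβ : 3 ≤ n.choose 2 := Nat.choose_le_choose 2 hn
  refine ⟨?_, ?_, ?_⟩
  · simpa using A_succ_choose_two_sub (j := 0) (by omega) (by omega) (by omega)
  · simpa [sum_range_succ] using A_succ_choose_two_sub (j := 1) (by omega) (by omega) (by omega)
  · simpa [sum_range_succ] using A_succ_choose_two_sub (j := 2) (by omega) (by omega) (by omega)

lemma dq_three : dq 3 = X + X ^ 2 := by
  simp [dq, sum_range_succ]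
  ring

lemma A_top_three_even {k : ℕ} (hk : 2 ≤ k) :
    A (2 * k) ((2 * k).choose 2) = 1 ∧
    A (2 * k) ((2 * k).choose 2 - 1) = k - 1 ∧
    A (2 * k) ((2 * k).choose 2 - 2) = k * (k - 1) := by
  induction k, hk using Nat.le_induction with
  | base =>
    obtain ⟨h0, h1, h2⟩ := A_succ_top_three (n := 3) le_rfl
    simp only [A] at *
    norm_num [dq_three, coeff_X, coeff_X_pow] at h0 h1 h2 ⊢
    exact ⟨h0, h1, h2⟩
  | succ k hk ih =>
    obtain ⟨h0, h1, h2⟩ := ih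
    obtain ⟨h0', h1', h2'⟩ := A_succ_top_three (n := 2 * k) (by omega)
    obtain ⟨h0'', h1'', h2''⟩ := A_succ_top_three (n := 2 * k + 1) (by omega)
    have hodd : (-1 : ℤ) ^ (2 * k + 1) = -1 := (odd_two_mul_add_one k).neg_one_pow
    have heven : (-1 : ℤ) ^ (2 * k + 1 + 1) = 1 := by rw [pow_succ, hodd]; norm_num
    rw [show 2 * (k + 1) = 2 * k + 1 + 1 by ring, h0'', h1'', h2'', h0', h1', h2', h0, h1, h2,
      hodd, heven]
    refine ⟨by norm_num, ?_, ?_⟩ <;> push_cast <;> ring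

theorem stmt_19 (n : ℕ) (hn : 6 ≤ n) (he : Even n) :
    (A n (n.choose 2) : ℚ) / (A n (n.choose 2 - 1) : ℚ) >
        (A n (n.choose 2 - 1) : ℚ) / (A n (n.choose 2 - 2) : ℚ) ∧
      A n (n.choose 2) * A n (n.choose 2 - 2) > A n (n.choose 2 - 1) ^ 2 := by
  obtain ⟨k, rfl⟩ := he.two_dvd
  obtain ⟨h0, h1, h2⟩ := A_top_three_even (k := k) (by omega)
  have hk : (3 : ℤ) ≤ k := by exact_mod_cast (by omega : 3 ≤ k)
  rw [h0, h1, h2]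
  refine ⟨?_, by nlinarith⟩
  have hb : (0 : ℚ) < ((k - 1 : ℤ) : ℚ) := by exact_mod_cast (by linarith : (0 : ℤ) < k - 1)
  have hc : (0 : ℚ) < ((k * (k - 1) : ℤ) : ℚ) := by
    exact_mod_cast (by nlinarith : (0 : ℤ) < k * (k - 1))
  rw [gt_iff_lt, div_lt_div_iff₀ hc hb]
  exact_mod_cast (by nlinarith : (k - 1 : ℤ) * (k - 1) < 1 * (k * (k - 1)))
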